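/- Let b : (0,∞)² → [0,∞) satisfy b(x,y) = 0 for x ≥ y and the mass-conservation condition ∫₀^y x·b(x,y) dx = y for all y > 0. Fix an integer i ≥ 2 and M > 0, and define the test function φ_M(x) = (x^i − M^{i−1} x)·χ_{(0,M)}(x) and ψ_{φ_M}(y) = ∫₀^y φ_M(x) b(x,y) dx − φ_M(y). Then ψ_{φ_M}(y) ≤ 0 for all y > 0. -/
import Mathlib


open MeasureTheory Set

/-- **Nonpositivity of the truncated higher-moment weight.**  Let `b ≥ 0` vanish for `x ≥ y`
and satisfy `∫₀^y x·b(x,y) dx = y`.  For an integer `i ≥ 2` and `M > 0`, let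
`φ_M(x) = (xⁱ − M^{i−1} x)·χ_{(0,M)}(x)` and
`ψ_{φ_M}(y) = ∫₀^y φ_M(x) b(x,y) dx − φ_M(y)`.  Then `ψ_{φ_M}(y) ≤ 0` for all `y > 0`. -/
theorem truncated_higher_weight_nonpos
    (M : ℝ) (hM : 0 < M) (i : ℕ) (hi : 2 ≤ i)
    (b : ℝ → ℝ → ℝ)
    (hb_nonneg : ∀ x y : ℝ, 0 < x → 0 < y → 0 ≤ b x y)
    (hb_zero : ∀ x y : ℝ, 0 < x → 0 < y → y ≤ x → b x y = 0)
    (hb_mass : ∀ y : ℝ, 0 < y → ∫ x in Ioc (0:ℝ) y, x * b x y = y) :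
    ∀ y : ℝ, 0 < y →
      (∫ x in Ioc (0:ℝ) y,
          (Ioo (0:ℝ) M).indicator (fun z => z ^ i - M ^ (i - 1) * z) x * b x y)
        - (Ioo (0:ℝ) M).indicator (fun z => z ^ i - M ^ (i - 1) * z) y ≤ 0 := by
  intro y hy
  by_cases hyM : y < M
  · -- case y < M
    -- g x = x * b x y is integrable
    have hgint : IntegrableOn (fun x => x * b x y) (Ioc (0:ℝ) y) := by
      by_contra h
      have := MeasureTheory.integral_undef h
      rw [hb_mass y hy] at this
      exact hy.ne' this
    have hyp : (0:ℝ) < y ^ (i-1) := pow_pos hy _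
    have hgnn : ∀ x ∈ Ioc (0:ℝ) y, 0 ≤ x * b x y := fun x hx =>
      mul_nonneg hx.1.le (hb_nonneg x y hx.1 hy)
    -- h x = x^(i-1) * (x * b x y) integrable by domination
    have hhint : IntegrableOn (fun x => x ^ (i-1) * (x * b x y)) (Ioc (0:ℝ) y) := by
      refine Integrable.mono' (hgint.const_mul (y ^ (i-1)))
        ((measurable_id.pow_const (i-1)).aestronglyMeasurable.mul hgint.1) ?_
      filter_upwards [ae_restrict_mem measurableSet_Ioc] with x hx
      rw [Real.norm_eq_abs, abs_of_nonneg (mul_nonneg (pow_nonneg hx.1.le _) (hgnn x hx))]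
      exact mul_le_mul_of_nonneg_right (pow_le_pow_left₀ hx.1.le hx.2 _) (hgnn x hx)
    -- rewrite the integral
    have hEq : (∫ x in Ioc (0:ℝ) y,
          (Ioo (0:ℝ) M).indicator (fun z => z ^ i - M ^ (i - 1) * z) x * b x y)
        = ∫ x in Ioc (0:ℝ) y, (x ^ (i-1) * (x * b x y) - M ^ (i-1) * (x * b x y)) := by
      refine setIntegral_congr_fun measurableSet_Ioc (fun x hx => ?_)
      have hxM : x ∈ Ioo (0:ℝ) M := ⟨hx.1, lt_of_le_of_lt hx.2 hyM⟩
      rw [indicator_of_mem hxM]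
      have : x ^ i = x ^ (i-1) * x := by
        conv_lhs => rw [show i = (i-1) + 1 by omega]
        rw [pow_succ]
      rw [this]; ring
    rw [hEq, integral_sub hhint (hgint.const_mul _), integral_const_mul, hb_mass y hy]
    have hyInd : (Ioo (0:ℝ) M).indicator (fun z => z ^ i - M ^ (i - 1) * z) y
        = y ^ i - M ^ (i-1) * y := by
      have hymem : y ∈ Ioo (0:ℝ) M := ⟨hy, hyM⟩
      rw [indicator_of_mem hymem]
    rw [hyInd]
    have hle : (∫ x in Ioc (0:ℝ) y, x ^ (i-1) * (x * b x y)) ≤ y ^ i := by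
      have : (∫ x in Ioc (0:ℝ) y, x ^ (i-1) * (x * b x y))
          ≤ ∫ x in Ioc (0:ℝ) y, y ^ (i-1) * (x * b x y) := by
        refine setIntegral_mono_on hhint (hgint.const_mul _) measurableSet_Ioc
          (fun x hx => mul_le_mul_of_nonneg_right
            (pow_le_pow_left₀ hx.1.le hx.2 _) (hgnn x hx))
      rw [integral_const_mul, hb_mass y hy] at this
      calc (∫ x in Ioc (0:ℝ) y, x ^ (i-1) * (x * b x y)) ≤ y ^ (i-1) * y := this
        _ = y ^ i := by rw [← pow_succ]; congr 1; omega
    linarith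
  · -- case M ≤ y
    push_neg at hyM
    have h1 : (∫ x in Ioc (0:ℝ) y,
        (Ioo (0:ℝ) M).indicator (fun z => z ^ i - M ^ (i - 1) * z) x * b x y) ≤ 0 := by
      refine setIntegral_nonpos measurableSet_Ioc (fun x hx => ?_)
      by_cases hxM : x ∈ Ioo (0:ℝ) M
      · rw [indicator_of_mem hxM]
        refine mul_nonpos_of_nonpos_of_nonneg ?_ (hb_nonneg x y hx.1 hy)
        have : x ^ i ≤ M ^ (i-1) * x := by
          have hxi : x ^ i = x ^ (i-1) * x := by
            conv_lhs => rw [show i = (i-1) + 1 by omega]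
            rw [pow_succ]
          rw [hxi]
          exact mul_le_mul_of_nonneg_right (pow_le_pow_left₀ hx.1.le hxM.2.le _) hx.1.le
        linarith
      · rw [indicator_of_notMem hxM, zero_mul]
    have h2 : (Ioo (0:ℝ) M).indicator (fun z => z ^ i - M ^ (i - 1) * z) y = 0 :=
      indicator_of_notMem (fun h => absurd h.2 (not_lt.mpr hyM)) _
    rw [h2]; linarith
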